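/- Let u_j(t) ∈ ℝ² (indices mod N) evolve by u̇_j + (2/(q_j+q_{j+1}))(τ_j − τ_{j+1}) = r_j with q_j = |u_j − u_{j-1}| > 0, τ_j = (u_j − u_{j-1})/q_j, r_j = f_j ν̄_j where |f_j(t)| ≤ F, and suppose q_j(t) ≤ Ch for all j, t ∈ [0,t̄]. Then for each j, ∫₀^{t̄} (q_j + q_{j+1}) |u̇_j − r_j|² dt ≤ C' h and ∫₀^{t̄} |τ_{j±1} − τ_j|²/(q_j + q_{j±1}) dt ≤ C' h, where C' depends only on F, C, t̄, and the initial data bound. -/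

import Mathlib

/-!
The edge length `q_j = |u_j - u_{j-1}|` satisfies
`q̇_j = ⟨τ_j, u̇_j - u̇_{j-1}⟩ = τ_j·(r_j - r_{j-1}) - |τ_{j+1} - τ_j|² / (q_j + q_{j+1})
- |τ_{j-1} - τ_j|² / (q_j + q_{j-1})`, because `⟨τ_j, τ_j - τ_{j±1}⟩ = |τ_{j±1} - τ_j|² / 2` for
unit vectors. Since `τ_j ⊥ ν_j`, only the `ν_{j±1}` part of `ν̄_j`, `ν̄_{j-1}` survives in
`τ_j·r_j`, `τ_j·r_{j-1}`, which gives `|τ_j·r_j| ≤ F |τ_{j+1} - τ_j|`; Young's inequality with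
weight `q_j + q_{j+1}` absorbs half of the dissipation. Integrating in time, `q_j ≥ 0` and
`q_j(0) ≤ Ch` bound both dissipation integrals by `O(h)`, and the equation of motion turns
`(q_j + q_{j+1}) |u̇_j - r_j|²` into four times the first one.
-/

open scoped RealInnerProductSpace

/-- Counter-clockwise rotation by 90 degrees in the plane. -/
noncomputable def perp (v : EuclideanSpace ℝ (Fin 2)) : EuclideanSpace ℝ (Fin 2) :=
  WithLp.toLp 2 ![-v 1, v 0]

open Set

section InnerProductSpace

variable {E : Type*} [NormedAddCommGroup E] [InnerProductSpace ℝ E]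

theorem HasDerivAt.norm {v : ℝ → E} {v' : E} {t : ℝ} (hv : HasDerivAt v v' t)
    (h0 : v t ≠ 0) :
    HasDerivAt (fun s => ‖v s‖) ⟪‖v t‖⁻¹ • v t, v'⟫ t := by
  have hsq : ‖v t‖ ^ 2 ≠ 0 := by positivity
  convert hv.norm_sq.sqrt hsq using 1
  · simp only [Real.sqrt_sq (norm_nonneg _)]
  · rw [Real.sqrt_sq (norm_nonneg _), real_inner_smul_left]
    field_simp

theorem inner_sub_eq_norm_sub_sq_div_two {a b : E} (h : ‖a‖ = ‖b‖) :
    ⟪a, a - b⟫ = ‖b - a‖ ^ 2 / 2 := by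
  rw [inner_sub_right, real_inner_self_eq_norm_sq, norm_sub_sq_real, h, real_inner_comm]
  ring

theorem mul_le_sq_mul_div_two_add {a x s : ℝ} (hs : 0 < s) :
    a * x ≤ a ^ 2 * s / 2 + x ^ 2 / s / 2 := by
  have hgap : a ^ 2 * s / 2 + x ^ 2 / s / 2 - a * x = (a * s - x) ^ 2 / (2 * s) := by
    field_simp
    ring
  have hgap_nonneg : 0 ≤ (a * s - x) ^ 2 / (2 * s) := by positivity
  linarith

theorem inner_le_of_add_smul_sub_eq_smul {a b v ν : E} {f F s : ℝ} (hs : 0 < s)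
    (hab : ‖a‖ = ‖b‖) (hf : |f| ≤ F) (hν : |⟪a, ν⟫| ≤ ‖b - a‖)
    (hv : v + (2 / s) • (a - b) = f • ν) :
    ⟪a, v⟫ ≤ F ^ 2 * s / 2 - ‖b - a‖ ^ 2 / s / 2 := by
  have hinner : ⟪a, v⟫ = f * ⟪a, ν⟫ - ‖b - a‖ ^ 2 / s := by
    rw [eq_sub_of_add_eq hv, inner_sub_right, real_inner_smul_right, real_inner_smul_right,
      inner_sub_eq_norm_sub_sq_div_two hab]
    ring
  have hforce : f * ⟪a, ν⟫ ≤ F * ‖b - a‖ :=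
    calc f * ⟪a, ν⟫ ≤ |f| * |⟪a, ν⟫| := by rw [← abs_mul]; exact le_abs_self _
      _ ≤ F * ‖b - a‖ := mul_le_mul hf hν (abs_nonneg _) ((abs_nonneg _).trans hf)
  linarith [mul_le_sq_mul_div_two_add (a := F) (x := ‖b - a‖) hs]

theorem mul_norm_two_div_smul_sq {s : ℝ} (hs : s ≠ 0) (x : E) :
    s * ‖(2 / s) • x‖ ^ 2 = 4 * (‖x‖ ^ 2 / s) := by
  rw [norm_smul, mul_pow, Real.norm_eq_abs, sq_abs]
  field_simp
  ring

end InnerProductSpace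

theorem inner_perp_self (v : EuclideanSpace ℝ (Fin 2)) : ⟪v, perp v⟫ = 0 := by
  simp [perp, PiLp.inner_apply, Fin.sum_univ_two]
  ring

theorem norm_perp (v : EuclideanSpace ℝ (Fin 2)) : ‖perp v‖ = ‖v‖ := by
  simp [EuclideanSpace.norm_eq, perp, Fin.sum_univ_two, add_comm]

theorem abs_inner_weighted_perp_le {a b : EuclideanSpace ℝ (Fin 2)} {p q : ℝ}
    (hb : ‖b‖ = 1) (hp : 0 ≤ p) (hq : 0 ≤ q) :
    |⟪a, (p + q)⁻¹ • (p • perp a + q • perp b)⟫| ≤ ‖b - a‖ := by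
  have hinner : ⟪a, (p + q)⁻¹ • (p • perp a + q • perp b)⟫
      = (q / (p + q)) * ⟪a - b, perp b⟫ := by
    rw [real_inner_smul_right, inner_add_right, real_inner_smul_right, real_inner_smul_right,
      inner_perp_self, inner_sub_left, inner_perp_self]
    ring
  have hweight : |q / (p + q)| ≤ 1 := by
    rw [abs_of_nonneg (by positivity)]
    exact div_le_one_of_le₀ (by linarith) (by positivity)
  calc |⟪a, (p + q)⁻¹ • (p • perp a + q • perp b)⟫|
      = |q / (p + q)| * |⟪a - b, perp b⟫| := by rw [hinner, abs_mul]
    _ ≤ 1 * (‖a - b‖ * ‖perp b‖) :=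
      mul_le_mul hweight (abs_real_inner_le_norm _ _) (abs_nonneg _) zero_le_one
    _ = ‖b - a‖ := by rw [norm_perp, hb, one_mul, mul_one, norm_sub_rev]

theorem integral_le_of_hasDerivAt_le_sub {g g' B : ℝ → ℝ} {a b M : ℝ} (hab : a ≤ b)
    (hg : ∀ t ∈ Icc a b, HasDerivAt g (g' t) t) (hB : ContinuousOn B (Icc a b))
    (hle : ∀ t ∈ Icc a b, g' t ≤ M - B t) :
    ∫ t in a..b, B t ≤ g a - g b + M * (b - a) := by
  have hBint : IntervalIntegrable B MeasureTheory.volume a b :=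
    hB.intervalIntegrable_of_Icc hab
  have := intervalIntegral.sub_le_integral_of_hasDeriv_right_of_le (φ := fun t => M - B t) hab
    (fun t ht => (hg t ht).continuousAt.continuousWithinAt)
    (fun t ht => (hg t (Ioo_subset_Icc_self ht)).hasDerivWithinAt)
    ((continuousOn_const.sub hB).integrableOn_Icc) (fun t ht => hle t (Ioo_subset_Icc_self ht))
  rw [intervalIntegral.integral_sub intervalIntegrable_const hBint,
    intervalIntegral.integral_const, smul_eq_mul] at this
  linarith

section Polygon

variable {ι : Type*} [AddGroup ι] [One ι]

theorem inner_tangent_sub_velocity_le {τ nubar r du : ι → EuclideanSpace ℝ (Fin 2)}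
    {q f : ι → ℝ} {F L : ℝ} (j : ι)
    (hτ : ∀ i, ‖τ i‖ = 1) (hq : ∀ i, 0 < q i) (hqL : ∀ i, q i ≤ L)
    (hnubar : ∀ i, nubar i =
      (q i + q (i + 1))⁻¹ • (q i • perp (τ i) + q (i + 1) • perp (τ (i + 1))))
    (hr : ∀ i, r i = f i • nubar i)
    (heq : ∀ i, du i + (2 / (q i + q (i + 1))) • (τ i - τ (i + 1)) = r i)
    (hf : ∀ i, |f i| ≤ F) :
    ⟪τ j, du j - du (j - 1)⟫ ≤ 2 * F ^ 2 * L -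
      ‖τ (j + 1) - τ j‖ ^ 2 / (q j + q (j + 1)) / 2 -
      ‖τ (j - 1) - τ j‖ ^ 2 / (q j + q (j - 1)) / 2 := by
  have hnext : ⟪τ j, du j⟫ ≤
      F ^ 2 * (q j + q (j + 1)) / 2 - ‖τ (j + 1) - τ j‖ ^ 2 / (q j + q (j + 1)) / 2 := by
    refine inner_le_of_add_smul_sub_eq_smul (add_pos (hq j) (hq (j + 1)))
      ((hτ j).trans (hτ (j + 1)).symm) (hf j) ?_ ((heq j).trans (hr j))
    rw [hnubar j]
    exact abs_inner_weighted_perp_le (hτ (j + 1)) (hq j).le (hq (j + 1)).le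
  have hprev : ⟪τ j, -du (j - 1)⟫ ≤
      F ^ 2 * (q j + q (j - 1)) / 2 - ‖τ (j - 1) - τ j‖ ^ 2 / (q j + q (j - 1)) / 2 := by
    -- the `(j - 1)`-st equation, negated, has the shape of the `j`-th one with `f ↦ -f`
    have hnubar' := hnubar (j - 1)
    have heq' := (heq (j - 1)).trans (hr (j - 1))
    rw [sub_add_cancel, add_comm (q (j - 1)), add_comm (q (j - 1) • _)] at hnubar'
    rw [sub_add_cancel, add_comm (q (j - 1))] at heq'
    refine inner_le_of_add_smul_sub_eq_smul (ν := nubar (j - 1)) (f := -f (j - 1))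
      (add_pos (hq j) (hq (j - 1))) ((hτ j).trans (hτ (j - 1)).symm)
      (by rw [abs_neg]; exact hf (j - 1)) ?_ ?_
    · rw [hnubar']
      exact abs_inner_weighted_perp_le (hτ (j - 1)) (hq j).le (hq (j - 1)).le
    · rw [neg_smul, ← heq']
      module
  have hlength : F ^ 2 * (q j + q (j + 1)) + F ^ 2 * (q j + q (j - 1)) ≤ 4 * F ^ 2 * L := by
    nlinarith [sq_nonneg F, hqL j, hqL (j + 1), hqL (j - 1)]
  rw [inner_sub_right]
  rw [inner_neg_right] at hprev
  linarith

structure IsPolygonFlow (T F L : ℝ) (u du τ nubar r : ι → ℝ → EuclideanSpace ℝ (Fin 2))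
    (q f : ι → ℝ → ℝ) : Prop where
  edge_length : ∀ j t, q j t = ‖u j t - u (j - 1) t‖
  tangent : ∀ j t, τ j t = (q j t)⁻¹ • (u j t - u (j - 1) t)
  normal : ∀ j t, nubar j t = (q j t + q (j + 1) t)⁻¹ •
    (q j t • perp (τ j t) + q (j + 1) t • perp (τ (j + 1) t))
  forcing : ∀ j t, r j t = f j t • nubar j t
  edge_length_pos : ∀ j, ∀ t ∈ Icc 0 T, 0 < q j t
  hasDerivAt : ∀ j, ∀ t ∈ Icc 0 T, HasDerivAt (u j) (du j t) t
  evolution : ∀ j, ∀ t ∈ Icc 0 T,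
    du j t + (2 / (q j t + q (j + 1) t)) • (τ j t - τ (j + 1) t) = r j t
  abs_forcing_le : ∀ j, ∀ t ∈ Icc 0 T, |f j t| ≤ F
  edge_length_le : ∀ j, ∀ t ∈ Icc 0 T, q j t ≤ L

namespace IsPolygonFlow

variable {T F L : ℝ} {u du τ nubar r : ι → ℝ → EuclideanSpace ℝ (Fin 2)}
  {q f : ι → ℝ → ℝ}

theorem continuousOn_vertex (hflow : IsPolygonFlow T F L u du τ nubar r q f) (j : ι) :
    ContinuousOn (u j) (Icc 0 T) := fun t ht =>
  (hflow.hasDerivAt j t ht).continuousAt.continuousWithinAt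

theorem continuousOn_edge_length (hflow : IsPolygonFlow T F L u du τ nubar r q f) (j : ι) :
    ContinuousOn (q j) (Icc 0 T) :=
  ((hflow.continuousOn_vertex j).sub (hflow.continuousOn_vertex (j - 1))).norm.congr
    fun t _ => hflow.edge_length j t

theorem continuousOn_tangent (hflow : IsPolygonFlow T F L u du τ nubar r q f) (j : ι) :
    ContinuousOn (τ j) (Icc 0 T) :=
  (((hflow.continuousOn_edge_length j).inv₀ fun t ht => (hflow.edge_length_pos j t ht).ne').smul
    ((hflow.continuousOn_vertex j).sub (hflow.continuousOn_vertex (j - 1)))).congr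
    fun t _ => hflow.tangent j t

theorem edge_ne_zero (hflow : IsPolygonFlow T F L u du τ nubar r q f) {j : ι} {t : ℝ}
    (ht : t ∈ Icc 0 T) : u j t - u (j - 1) t ≠ 0 :=
  norm_pos_iff.mp (hflow.edge_length j t ▸ hflow.edge_length_pos j t ht)

theorem norm_tangent (hflow : IsPolygonFlow T F L u du τ nubar r q f) {j : ι} {t : ℝ}
    (ht : t ∈ Icc 0 T) : ‖τ j t‖ = 1 := by
  rw [hflow.tangent, hflow.edge_length]
  exact norm_smul_inv_norm (hflow.edge_ne_zero ht)

theorem hasDerivAt_edge_length (hflow : IsPolygonFlow T F L u du τ nubar r q f) {j : ι} {t : ℝ}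
    (ht : t ∈ Icc 0 T) : HasDerivAt (q j) ⟪τ j t, du j t - du (j - 1) t⟫ t := by
  rw [hflow.tangent, hflow.edge_length]
  exact (((hflow.hasDerivAt j t ht).sub (hflow.hasDerivAt (j - 1) t ht)).norm
    (hflow.edge_ne_zero ht)).congr_of_eventuallyEq (.of_forall (hflow.edge_length j))

theorem inner_tangent_sub_velocity_le (hflow : IsPolygonFlow T F L u du τ nubar r q f) (j : ι)
    {t : ℝ} (ht : t ∈ Icc 0 T) :
    ⟪τ j t, du j t - du (j - 1) t⟫ ≤ 2 * F ^ 2 * L -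
      ‖τ (j + 1) t - τ j t‖ ^ 2 / (q j t + q (j + 1) t) / 2 -
      ‖τ (j - 1) t - τ j t‖ ^ 2 / (q j t + q (j - 1) t) / 2 :=
  _root_.inner_tangent_sub_velocity_le (τ := (τ · t)) (nubar := (nubar · t)) (r := (r · t))
    (du := (du · t)) (q := (q · t)) (f := (f · t)) j (fun _ => hflow.norm_tangent ht)
    (hflow.edge_length_pos · t ht) (hflow.edge_length_le · t ht) (hflow.normal · t)
    (hflow.forcing · t) (hflow.evolution · t ht) (hflow.abs_forcing_le · t ht)

theorem turning_nonneg (hflow : IsPolygonFlow T F L u du τ nubar r q f) (i j : ι) {t : ℝ}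
    (ht : t ∈ Icc 0 T) : 0 ≤ ‖τ i t - τ j t‖ ^ 2 / (q j t + q i t) :=
  div_nonneg (sq_nonneg _)
    (add_pos (hflow.edge_length_pos j t ht) (hflow.edge_length_pos i t ht)).le

theorem integral_turning_le_of_le (hflow : IsPolygonFlow T F L u du τ nubar r q f) (hT : 0 ≤ T)
    (i j : ι) (hle : ∀ t ∈ Icc 0 T, ⟪τ j t, du j t - du (j - 1) t⟫ ≤
      2 * F ^ 2 * L - ‖τ i t - τ j t‖ ^ 2 / (q j t + q i t) / 2) :
    ∫ t in (0:ℝ)..T, ‖τ i t - τ j t‖ ^ 2 / (q j t + q i t) ≤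
      2 * L * (1 + 2 * F ^ 2 * T) := by
  have hcont : ContinuousOn (fun t => ‖τ i t - τ j t‖ ^ 2 / (q j t + q i t) / 2) (Icc 0 T) :=
    ((((hflow.continuousOn_tangent i).sub (hflow.continuousOn_tangent j)).norm.pow 2).div
      ((hflow.continuousOn_edge_length j).add (hflow.continuousOn_edge_length i))
      fun t ht => (add_pos (hflow.edge_length_pos j t ht)
        (hflow.edge_length_pos i t ht)).ne').div_const 2
  have hintegral := integral_le_of_hasDerivAt_le_sub hT
    (fun t ht => hflow.hasDerivAt_edge_length ht) hcont hle
  rw [intervalIntegral.integral_div] at hintegral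
  linarith [hflow.edge_length_le j 0 (left_mem_Icc.mpr hT),
    hflow.edge_length_pos j T (right_mem_Icc.mpr hT)]

theorem integral_turning_next_le (hflow : IsPolygonFlow T F L u du τ nubar r q f) (hT : 0 ≤ T)
    (j : ι) :
    ∫ t in (0:ℝ)..T, ‖τ (j + 1) t - τ j t‖ ^ 2 / (q j t + q (j + 1) t) ≤
      2 * L * (1 + 2 * F ^ 2 * T) :=
  hflow.integral_turning_le_of_le hT (j + 1) j fun t ht => by
    linarith [hflow.inner_tangent_sub_velocity_le j ht, hflow.turning_nonneg (j - 1) j ht]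

theorem integral_turning_prev_le (hflow : IsPolygonFlow T F L u du τ nubar r q f) (hT : 0 ≤ T)
    (j : ι) :
    ∫ t in (0:ℝ)..T, ‖τ (j - 1) t - τ j t‖ ^ 2 / (q j t + q (j - 1) t) ≤
      2 * L * (1 + 2 * F ^ 2 * T) :=
  hflow.integral_turning_le_of_le hT (j - 1) j fun t ht => by
    linarith [hflow.inner_tangent_sub_velocity_le j ht, hflow.turning_nonneg (j + 1) j ht]

theorem integral_velocity_eq (hflow : IsPolygonFlow T F L u du τ nubar r q f) (hT : 0 ≤ T)
    (j : ι) :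
    ∫ t in (0:ℝ)..T, (q j t + q (j + 1) t) * ‖du j t - r j t‖ ^ 2 =
      4 * ∫ t in (0:ℝ)..T, ‖τ (j + 1) t - τ j t‖ ^ 2 / (q j t + q (j + 1) t) := by
  rw [← intervalIntegral.integral_const_mul]
  refine intervalIntegral.integral_congr fun t ht => ?_
  rw [uIcc_of_le hT] at ht
  rw [← hflow.evolution j t ht, sub_add_cancel_left, norm_neg, norm_sub_rev (τ (j + 1) t),
    mul_norm_two_div_smul_sq (add_pos (hflow.edge_length_pos j t ht)
      (hflow.edge_length_pos (j + 1) t ht)).ne']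

end IsPolygonFlow

end Polygon

theorem discrete_velocity_integral_bounds_general (F C tbar : ℝ)
    (hC : 0 < C) (htbar : 0 ≤ tbar) :
    ∃ C' > 0, ∀ (N : ℕ), 0 < N →
      ∀ (h : ℝ) (u du : ZMod N → ℝ → EuclideanSpace ℝ (Fin 2))
        (f : ZMod N → ℝ → ℝ) (q : ZMod N → ℝ → ℝ)
        (τ nubar r : ZMod N → ℝ → EuclideanSpace ℝ (Fin 2)),
      0 < h →
      (∀ j t, q j t = ‖u j t - u (j - 1) t‖) →
      (∀ j t, τ j t = (q j t)⁻¹ • (u j t - u (j - 1) t)) →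
      (∀ j t, nubar j t = (q j t + q (j + 1) t)⁻¹ •
          (q j t • perp (τ j t) + q (j + 1) t • perp (τ (j + 1) t))) →
      (∀ j t, r j t = f j t • nubar j t) →
      (∀ (j : ZMod N), ∀ t ∈ Set.Icc 0 tbar, 0 < q j t) →
      (∀ (j : ZMod N), ∀ t ∈ Set.Icc 0 tbar, HasDerivAt (fun t' => u j t') (du j t) t) →
      (∀ (j : ZMod N), ∀ t ∈ Set.Icc 0 tbar,
        du j t + (2 / (q j t + q (j + 1) t)) • (τ j t - τ (j + 1) t) = r j t) →
      (∀ (j : ZMod N), ∀ t ∈ Set.Icc 0 tbar, |f j t| ≤ F) →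
      (∀ (j : ZMod N), ∀ t ∈ Set.Icc 0 tbar, q j t ≤ C * h) →
      ∀ j : ZMod N,
        (∫ t in (0:ℝ)..tbar, (q j t + q (j + 1) t) * ‖du j t - r j t‖ ^ 2) ≤ C' * h ∧
        (∫ t in (0:ℝ)..tbar, ‖τ (j + 1) t - τ j t‖ ^ 2 / (q j t + q (j + 1) t)) ≤ C' * h ∧
        (∫ t in (0:ℝ)..tbar, ‖τ (j - 1) t - τ j t‖ ^ 2 / (q j t + q (j - 1) t)) ≤ C' * h := by
  refine ⟨8 * C * (1 + 2 * F ^ 2 * tbar), by positivity, ?_⟩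
  intro N _ h u du f q τ nubar r hh hq hτ hnubar hr hqpos hdu heq hf hqle j
  have hflow : IsPolygonFlow tbar F (C * h) u du τ nubar r q f :=
    ⟨hq, hτ, hnubar, hr, hqpos, hdu, heq, hf, hqle⟩
  have hnext := hflow.integral_turning_next_le htbar j
  have hprev := hflow.integral_turning_prev_le htbar j
  have hscale : 0 ≤ C * h * (1 + 2 * F ^ 2 * tbar) := by positivity
  rw [hflow.integral_velocity_eq htbar j]
  exact ⟨by linarith, by linarith, by linarith⟩

/-- Estimate (4.9): for the discrete evolution
`u̇_j + (2/(q_j+q_{j+1}))(τ_j - τ_{j+1}) = r_j` with `r_j = f_j ν̄_j`, `|f_j| ≤ F`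
and `q_j ≤ C h` on `[0,t̄]`, one has
`∫₀^{t̄} (q_j+q_{j+1})|u̇_j - r_j|² dt ≤ C' h` and
`∫₀^{t̄} |τ_{j±1}-τ_j|²/(q_j+q_{j±1}) dt ≤ C' h`, with `C'` depending only on
`F`, `C`, `t̄`. -/
theorem discrete_velocity_integral_bounds (F C tbar : ℝ)
    (hF : 0 ≤ F) (hC : 0 < C) (htbar : 0 ≤ tbar) :
    ∃ C' > 0, ∀ (N : ℕ), 0 < N →
      ∀ (h : ℝ) (u du : ZMod N → ℝ → EuclideanSpace ℝ (Fin 2))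
        (f : ZMod N → ℝ → ℝ) (q : ZMod N → ℝ → ℝ)
        (τ nubar r : ZMod N → ℝ → EuclideanSpace ℝ (Fin 2)),
      0 < h →
      (∀ j t, q j t = ‖u j t - u (j - 1) t‖) →
      (∀ j t, τ j t = (q j t)⁻¹ • (u j t - u (j - 1) t)) →
      (∀ j t, nubar j t = (q j t + q (j + 1) t)⁻¹ •
          (q j t • perp (τ j t) + q (j + 1) t • perp (τ (j + 1) t))) →
      (∀ j t, r j t = f j t • nubar j t) →
      (∀ (j : ZMod N), ∀ t ∈ Set.Icc 0 tbar, 0 < q j t) →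
      (∀ (j : ZMod N), ∀ t ∈ Set.Icc 0 tbar, HasDerivAt (fun t' => u j t') (du j t) t) →
      (∀ (j : ZMod N), ∀ t ∈ Set.Icc 0 tbar,
        du j t + (2 / (q j t + q (j + 1) t)) • (τ j t - τ (j + 1) t) = r j t) →
      (∀ (j : ZMod N), ∀ t ∈ Set.Icc 0 tbar, |f j t| ≤ F) →
      (∀ (j : ZMod N), ∀ t ∈ Set.Icc 0 tbar, q j t ≤ C * h) →
      ∀ j : ZMod N,
        (∫ t in (0:ℝ)..tbar, (q j t + q (j + 1) t) * ‖du j t - r j t‖ ^ 2) ≤ C' * h ∧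
        (∫ t in (0:ℝ)..tbar, ‖τ (j + 1) t - τ j t‖ ^ 2 / (q j t + q (j + 1) t)) ≤ C' * h ∧
        (∫ t in (0:ℝ)..tbar, ‖τ (j - 1) t - τ j t‖ ^ 2 / (q j t + q (j - 1) t)) ≤ C' * h :=
  discrete_velocity_integral_bounds_general F C tbar hC htbar
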